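/- Let I be an almost reverse lexicographic ideal in R = k[x_1,...,x_n] whose last generator M_ω satisfies max M_ω = n. Then for every d ≥ f, where f = min{t : x_{n-1}^t ∈ I}, one has H(R/I, d-1) - H(R/I, d) equal to the number of minimal generators M of I with max M = n and deg M = d; in particular H(R/I,d) ≤ H(R/I,d-1) for all d ≥ f. -/

import Mathlib

open scoped Classical

/-- Degree of an exponent vector (monomial). -/
def mdeg {n : ℕ} (m : Fin n → ℕ) : ℕ := ∑ i, m i

/-- Degree reverse lexicographic order: `M > N`. -/
def RevLexGT {n : ℕ} (M N : Fin n → ℕ) : Prop :=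
  mdeg N < mdeg M ∨
    (mdeg M = mdeg N ∧ ∃ s : Fin n, (∀ i : Fin n, s < i → M i = N i) ∧ M s < N s)

/-- A monomial ideal, identified with its set of monomials (exponent vectors),
is upward closed under divisibility. -/
def MonIdeal {n : ℕ} (I : Set (Fin n → ℕ)) : Prop :=
  ∀ m ∈ I, ∀ m' : Fin n → ℕ, (∀ i, m i ≤ m' i) → m' ∈ I

/-- `m` is a minimal generator of the monomial ideal `I`. -/
def MinGen {n : ℕ} (I : Set (Fin n → ℕ)) (m : Fin n → ℕ) : Prop :=
  m ∈ I ∧ ∀ m' ∈ I, (∀ i, m' i ≤ m i) → m' = m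

/-- Almost reverse lexicographic ideal. -/
def ARL {n : ℕ} (I : Set (Fin n → ℕ)) : Prop :=
  ∀ M N : Fin n → ℕ, MinGen I N → mdeg M = mdeg N → RevLexGT M N → M ∈ I

/-- Strongly stable monomial ideal. -/
def StronglyStable {n : ℕ} (I : Set (Fin n → ℕ)) : Prop :=
  MonIdeal I ∧ ∀ M ∈ I, ∀ i j : Fin n, j < i → 0 < M i →
    (fun k => if k = i then M i - 1 else if k = j then M j + 1 else M k) ∈ I

/-- The last generator `M_ω` of a monomial ideal: a minimal generator of maximal
degree which is smallest in the degree reverse lexicographic order among the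
minimal generators of that degree. -/
def IsLastGen {n : ℕ} (I : Set (Fin n → ℕ)) (W : Fin n → ℕ) : Prop :=
  MinGen I W ∧ (∀ N, MinGen I N → mdeg N ≤ mdeg W) ∧
    (∀ N, MinGen I N → mdeg N = mdeg W → N = W ∨ RevLexGT N W)

/-- `max M`: the largest (1-based) index of a variable dividing `M` (0 for `M = 1`). -/
def maxVar {n : ℕ} (m : Fin n → ℕ) : ℕ :=
  Finset.univ.sup (fun i : Fin n => if 0 < m i then i.1 + 1 else 0)

/-- Hilbert function of `R/I`: the number of monomials of degree `d` not in `I`. -/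
noncomputable def hilb {n : ℕ} (I : Set (Fin n → ℕ)) (d : ℕ) : ℕ :=
  Set.ncard {m : Fin n → ℕ | mdeg m = d ∧ m ∉ I}

/-- Truncation of an exponent vector to its first `i` coordinates. -/
def truncW {n : ℕ} (W : Fin n → ℕ) (i : ℕ) : Fin n → ℕ :=
  fun j => if j.1 < i then W j else 0

/-- The set `𝓘_i` (for `i ≤ μ-2`): exponent vectors supported on the first `i`
coordinates, coordinatewise below the `f_j`'s, i.e. not lying in `I`. -/
def Iset {n : ℕ} (I : Set (Fin n → ℕ)) (i : ℕ) : Set (Fin n → ℕ) :=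
  {α | (∀ k : Fin n, i ≤ k.1 → α k = 0) ∧ α ∉ I}

/-- The set `𝓘_{μ-1}`, which additionally requires `α ≥ (ω_1,…,ω_{μ-1})`. -/
def IsetLast {n : ℕ} (I : Set (Fin n → ℕ)) (W : Fin n → ℕ) (μ : ℕ) :
    Set (Fin n → ℕ) :=
  {α | α ∈ Iset I (μ - 1) ∧ (α = truncW W (μ - 1) ∨ RevLexGT α (truncW W (μ - 1)))}

/-- `f_{i+1}(α) = min {t : x^α x_{i+1}^t ∈ I}` (ℕ-valued, junk `0` if no such `t`). -/
noncomputable def fmin {n : ℕ} (I : Set (Fin n → ℕ)) (α : Fin n → ℕ) (i : Fin n) : ℕ :=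
  sInf {t | α + Pi.single i t ∈ I}

/-- `f_{i+1}(α)` valued in `ℕ∞` (equal to `⊤` when no power works). -/
noncomputable def fminTop {n : ℕ} (I : Set (Fin n → ℕ)) (α : Fin n → ℕ) (i : Fin n) : ℕ∞ :=
  sInf ((fun t : ℕ => (t : ℕ∞)) '' {t | α + Pi.single i t ∈ I})

/-- Iterated truncated difference sequence `h^{(i)}`. -/
def hseq (h : ℕ → ℕ) : ℕ → ℕ → ℕ
  | 0, d => h d
  | _ + 1, 0 => 1
  | i + 1, e + 1 => hseq h i (e + 1) - hseq h i e

/-- The set whose infimum is `r_i(h)`. -/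
def rset (h : ℕ → ℕ) (i : ℕ) : Set ℕ :=
  {d | 1 ≤ d ∧ hseq h i d ≤ hseq h i (d - 1)}

/-- `D(h) = min {i : r_i < ∞}`. -/
noncomputable def Dval (h : ℕ → ℕ) : ℕ := sInf {i | (rset h i).Nonempty}

/-- `h` is unimodal at each tail. -/
def UnimodalAtTails (h : ℕ → ℕ) : Prop :=
  ∀ i, Dval h ≤ i → i < max 1 (h 1) →
    ∀ d, (∃ r ∈ rset h i, r ≤ d) → hseq h i d ≤ hseq h i (d - 1)

/-- The polynomial `Π (1 - z^{d_i})`. -/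
noncomputable def froPoly (ds : List ℕ) : Polynomial ℤ :=
  (ds.map (fun d => 1 - Polynomial.X ^ d)).prod

/-- Coefficient of `z^i` in the power series `Π (1 - z^{d_i}) / (1-z)^n`. -/
noncomputable def froCoeff (n : ℕ) (ds : List ℕ) (i : ℕ) : ℤ :=
  ∑ j ∈ Finset.range (i + 1),
    (froPoly ds).coeff j * (Nat.choose (n - 1 + (i - j)) (i - j) : ℤ)

/-- The Fröberg sequence `|n; d_1,…,d_m|`: the truncation `| · |` of the power
series `Π (1 - z^{d_i}) / (1-z)^n`. -/
noncomputable def fro (n : ℕ) (ds : List ℕ) (i : ℕ) : ℕ :=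
  if ∀ j ≤ i, 0 < froCoeff n ds j then (froCoeff n ds i).toNat else 0

/-!
Reverse-lexicographic comparison with the last generator `M_ω` (divisible by `x_n`) shows that
every monomial of degree `deg M_ω` free of `x_n` lies in `I`, so `f` is finite and `x_{n-1}^f`
is a minimal generator; comparing with `x_{n-1}^f` then puts every monomial of degree `≥ f`
free of `x_n` into `I`. Hence for `d ≥ f` every standard monomial of degree `d` is divisible by
`x_n`, and `m ↦ x_n m` maps the standard monomials of degree `d - 1` bijectively onto the standard
monomials of degree `d` together with the monomials `M ∈ I` of degree `d` with `M / x_n ∉ I`.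
Since an ARL ideal is strongly stable, the latter are exactly the minimal generators of degree `d`
divisible by `x_n`.
-/

section Monomials

variable {n : ℕ}

lemma mdeg_add (a b : Fin n → ℕ) : mdeg (a + b) = mdeg a + mdeg b :=
  Finset.sum_add_distrib

@[simp]
lemma mdeg_single (i : Fin n) (t : ℕ) : mdeg (Pi.single i t) = t := by
  simp [mdeg]

lemma apply_le_mdeg (m : Fin n → ℕ) (i : Fin n) : m i ≤ mdeg m :=
  Finset.single_le_sum (fun j _ => Nat.zero_le (m j)) (Finset.mem_univ i)

lemma mdeg_mono : Monotone (mdeg : (Fin n → ℕ) → ℕ) :=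
  fun _ _ h => Finset.sum_le_sum fun i _ => h i

lemma eq_of_le_of_mdeg_eq {a b : Fin n → ℕ} (hab : a ≤ b) (h : mdeg a = mdeg b) : a = b :=
  funext fun i => (Finset.sum_eq_sum_iff_of_le fun i _ => hab i).1 h i (Finset.mem_univ i)

lemma single_le_of_le {m : Fin n → ℕ} {i : Fin n} {t : ℕ} (h : t ≤ m i) : Pi.single i t ≤ m :=
  fun k => by rcases eq_or_ne k i with rfl | hk <;> simp [*]

lemma sub_single_add_single {m : Fin n → ℕ} {i : Fin n} (h : 0 < m i) :
    m - Pi.single i 1 + Pi.single i 1 = m :=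
  tsub_add_cancel_of_le (single_le_of_le h)

lemma exists_le_mdeg_eq {m : Fin n → ℕ} : ∀ {e : ℕ}, e ≤ mdeg m → ∃ α ≤ m, mdeg α = e
  | 0, _ => ⟨0, zero_le, by simp [mdeg]⟩
  | e + 1, he => by
    obtain ⟨α, hαm, hα⟩ := exists_le_mdeg_eq (m := m) (e := e) (by omega)
    obtain ⟨i, hi⟩ : ∃ i, α i < m i := by
      by_contra! h
      have := mdeg_mono h
      omega
    refine ⟨α + Pi.single i 1, fun k => ?_, by rw [mdeg_add, hα, mdeg_single]⟩
    rcases eq_or_ne k i with rfl | hk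
    · simpa using hi
    · simpa [hk] using hαm k

lemma finite_setOf_mdeg_eq (d : ℕ) : {m : Fin n → ℕ | mdeg m = d}.Finite :=
  (Set.finite_Iic fun _ => d).subset fun m hm i => hm ▸ apply_le_mdeg m i

lemma shift_eq {M : Fin n → ℕ} {i j : Fin n} (hji : j ≠ i) (hM : 0 < M i) :
    (fun k => if k = i then M i - 1 else if k = j then M j + 1 else M k) =
      M - Pi.single i 1 + Pi.single j 1 := by
  funext k
  rcases eq_or_ne k i with rfl | hki
  · simp [hji]
  · rcases eq_or_ne k j with rfl | hkj <;> simp [*]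

lemma mdeg_shift {M : Fin n → ℕ} {i : Fin n} (j : Fin n) (hM : 0 < M i) :
    mdeg (M - Pi.single i 1 + Pi.single j 1) = mdeg M := by
  have h := congrArg mdeg (sub_single_add_single hM)
  rw [mdeg_add, mdeg_single] at h
  rw [mdeg_add, mdeg_single, h]

end Monomials

section Ideals

variable {n : ℕ} {I : Set (Fin n → ℕ)}

lemma exists_minGen_le {m : Fin n → ℕ} (hm : m ∈ I) : ∃ g, MinGen I g ∧ g ≤ m := by
  obtain ⟨g, ⟨hgI, hgm⟩, hmin⟩ :=
    wellFounded_lt.has_min {g | g ∈ I ∧ g ≤ m} ⟨m, hm, le_rfl⟩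
  refine ⟨g, ⟨hgI, fun g' hg' hle => ?_⟩, hgm⟩
  by_contra hne
  exact hmin g' ⟨hg', le_trans hle hgm⟩ (lt_of_le_of_ne hle hne)

/-- If `g ≤ M` is a minimal generator with `g_i = M_i`, the shift of `g` is reverse-lex larger
than `g`, hence in `I`, and it divides the shift of `M`. -/
theorem ARL.stronglyStable (hI : MonIdeal I) (hARL : ARL I) : StronglyStable I := by
  refine ⟨hI, fun M hM i j hji hMi => ?_⟩
  rw [shift_eq hji.ne hMi]
  obtain ⟨g, hg, hgM⟩ := exists_minGen_le hM
  by_cases hgi : g i < M i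
  · have hg_le : g ≤ M - Pi.single i 1 := fun k => by
      rcases eq_or_ne k i with rfl | hki
      · simpa using Nat.le_sub_one_of_lt hgi
      · simpa [hki] using hgM k
    exact hI g hg.1 _ (hg_le.trans le_self_add)
  · have hgi' : g i = M i := le_antisymm (hgM i) (not_lt.1 hgi)
    have hdeg := mdeg_shift j (hgi' ▸ hMi : 0 < g i)
    have hshift : g - Pi.single i 1 + Pi.single j 1 ∈ I := by
      refine hARL _ g hg hdeg (Or.inr ⟨hdeg, i, fun k hik => ?_, ?_⟩)
      · simp [hik.ne', (hji.trans hik).ne']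
      · rw [Pi.add_apply, Pi.sub_apply, Pi.single_eq_same, Pi.single_eq_of_ne hji.ne']
        omega
    have hshift_le : g - Pi.single i 1 + Pi.single j 1 ≤ M - Pi.single i 1 + Pi.single j 1 := by
      gcongr
    exact hI _ hshift _ hshift_le

lemma image_add_single_setOf (i : Fin n) (d : ℕ) :
    (· + Pi.single i 1) '' {m | mdeg m = d ∧ m ∉ I} =
      {m | mdeg m = d + 1 ∧ 0 < m i ∧ m - Pi.single i 1 ∉ I} := by
  ext x
  constructor
  · rintro ⟨m, ⟨hmd, hm⟩, rfl⟩
    exact ⟨by rw [mdeg_add, mdeg_single, hmd], by simp, by rwa [add_tsub_cancel_right]⟩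
  · rintro ⟨hxd, hx, hsub⟩
    refine ⟨x - Pi.single i 1, ⟨?_, hsub⟩, sub_single_add_single hx⟩
    have := congrArg mdeg (sub_single_add_single hx)
    rw [mdeg_add, mdeg_single] at this
    omega

lemma minGen_single_sInf {j : Fin n} {t₀ : ℕ} (ht₀ : Pi.single j t₀ ∈ I) :
    MinGen I (Pi.single j (sInf {t | Pi.single j t ∈ I})) := by
  refine ⟨Nat.sInf_mem (⟨t₀, ht₀⟩ : {t | Pi.single j t ∈ I}.Nonempty),
    fun m' hm' hle => le_antisymm hle ?_⟩
  have hm'_eq : m' = Pi.single j (m' j) := funext fun k => by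
    rcases eq_or_ne k j with rfl | hk
    · simp
    · simpa [hk] using hle k
  rw [hm'_eq] at hm' ⊢
  exact Pi.single_le_single.2 (Nat.sInf_le hm')

/-- A monomial of degree `f` supported on the variables up to `x_j`, other than `x_j^f`, has a
smaller exponent of `x_j`, so it is reverse-lex larger than the generator `x_j^f`. -/
lemma ARL.mem_of_mdeg_eq (hARL : ARL I) {j : Fin n} {f : ℕ} (hgen : MinGen I (Pi.single j f))
    {α : Fin n → ℕ} (hα : mdeg α = f) (hsupp : ∀ k, j < k → α k = 0) : α ∈ I := by
  by_cases hαj : α j < f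
  · have hdeg : mdeg α = mdeg (Pi.single j f) := by rw [hα, mdeg_single]
    refine hARL α _ hgen hdeg (Or.inr ⟨hdeg, j, fun k hjk => ?_, by simpa using hαj⟩)
    simp [hsupp k hjk, hjk.ne']
  · have hle : Pi.single j f ≤ α := single_le_of_le (not_lt.1 hαj)
    exact eq_of_le_of_mdeg_eq hle (by rw [mdeg_single, hα]) ▸ hgen.1

lemma ARL.mem_of_le_mdeg (hI : MonIdeal I) (hARL : ARL I) {j : Fin n} {f : ℕ}
    (hgen : MinGen I (Pi.single j f)) {m : Fin n → ℕ} (hm : f ≤ mdeg m)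
    (hsupp : ∀ k, j < k → m k = 0) : m ∈ I := by
  obtain ⟨α, hαm, hα⟩ := exists_le_mdeg_eq hm
  refine hI α (hARL.mem_of_mdeg_eq hgen hα fun k hjk => ?_) m hαm
  simpa [hsupp k hjk] using hαm k

end Ideals

section LastVariable

variable {n : ℕ} {I : Set (Fin (n + 1) → ℕ)}

lemma maxVar_eq_iff (M : Fin (n + 1) → ℕ) : maxVar M = n + 1 ↔ 0 < M (Fin.last n) := by
  constructor
  · intro h
    by_contra h0
    have : maxVar M ≤ n := Finset.sup_le fun i _ => by
      split_ifs with hi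
      · have hne : i ≠ Fin.last n := by rintro rfl; exact h0 hi
        have := Fin.val_lt_last hne
        omega
      · omega
    omega
  · intro h
    refine le_antisymm (Finset.sup_le fun i _ => ?_) ?_
    · split_ifs <;> omega
    · have := Finset.le_sup (f := fun i : Fin (n + 1) => if 0 < M i then i.1 + 1 else 0)
        (Finset.mem_univ (Fin.last n))
      simp only [if_pos h, Fin.val_last] at this
      exact this

lemma ARL.single_mdeg_mem (hARL : ARL I) {W : Fin (n + 1) → ℕ} (hW : MinGen I W)
    (hWlast : 0 < W (Fin.last n)) {j : Fin (n + 1)} (hj : j ≠ Fin.last n) :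
    Pi.single j (mdeg W) ∈ I := by
  have hdeg : mdeg (Pi.single j (mdeg W)) = mdeg W := mdeg_single _ _
  refine hARL _ W hW hdeg (Or.inr ⟨hdeg, Fin.last n, fun k hk => ?_, ?_⟩)
  · exact absurd hk (Fin.le_last k).not_gt
  · rwa [Pi.single_eq_of_ne hj.symm]

/-- An `m' ∈ I` dividing `x_n m` has a larger `x_n`-exponent than `m` (else `m' ∣ m`) and
agrees with `m` elsewhere (else its shift from `x_n` to a deficient `x_j` divides `m`). -/
theorem StronglyStable.minGen_add_single_last (hS : StronglyStable I) {m : Fin (n + 1) → ℕ}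
    (hm : m ∉ I) (hmI : m + Pi.single (Fin.last n) 1 ∈ I) :
    MinGen I (m + Pi.single (Fin.last n) 1) := by
  refine ⟨hmI, fun m' hm' hle => le_antisymm hle fun k => ?_⟩
  have hlast : m (Fin.last n) < m' (Fin.last n) := by
    by_contra! h
    refine hm (hS.1 m' hm' m fun k => ?_)
    rcases eq_or_ne k (Fin.last n) with rfl | hk
    · exact h
    · simpa [hk] using hle k
  rcases eq_or_ne k (Fin.last n) with rfl | hk
  · simpa using hlast
  · by_contra! hlt
    simp only [Pi.add_apply, Pi.single_eq_of_ne hk, add_zero] at hlt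
    have hshift := hS.2 m' hm' _ k (Fin.lt_last_iff_ne_last.2 hk) (by omega)
    rw [shift_eq hk (by omega)] at hshift
    refine hm (hS.1 _ hshift m fun i => ?_)
    have := hle i
    rcases eq_or_ne i (Fin.last n) with rfl | hi
    · rw [Pi.add_apply, Pi.single_eq_same] at this
      rw [Pi.add_apply, Pi.sub_apply, Pi.single_eq_same, Pi.single_eq_of_ne hk.symm]
      omega
    · rcases eq_or_ne i k with rfl | hik
      · rw [Pi.add_apply, Pi.sub_apply, Pi.single_eq_of_ne hk, Pi.single_eq_same]
        omega
      · simpa [hi, hik] using this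

theorem hilb_eq_hilb_succ_add (hI : MonIdeal I) (hARL : ARL I)
    {d : ℕ} (hlow : ∀ m, mdeg m = d + 1 → m (Fin.last n) = 0 → m ∈ I) :
    hilb I d = hilb I (d + 1) +
      {M : Fin (n + 1) → ℕ | MinGen I M ∧ maxVar M = n + 1 ∧ mdeg M = d + 1}.ncard := by
  have hsplit : {m | mdeg m = d + 1 ∧ 0 < m (Fin.last n) ∧ m - Pi.single (Fin.last n) 1 ∉ I} =
      {m | mdeg m = d + 1 ∧ m ∉ I} ∪
        {M | MinGen I M ∧ maxVar M = n + 1 ∧ mdeg M = d + 1} := by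
    ext x
    simp only [Set.mem_ofPred_eq, Set.mem_union, maxVar_eq_iff]
    constructor
    · rintro ⟨hxd, hx, hsub⟩
      by_cases hxI : x ∈ I
      · rw [← sub_single_add_single hx] at hxI ⊢
        exact Or.inr ⟨(hARL.stronglyStable hI).minGen_add_single_last hsub hxI, by simp, by
          rwa [sub_single_add_single hx]⟩
      · exact Or.inl ⟨hxd, hxI⟩
    · rintro (⟨hxd, hxI⟩ | ⟨hgen, hx, hxd⟩)
      · have hx : 0 < x (Fin.last n) := Nat.pos_of_ne_zero fun h => hxI (hlow x hxd h)
        exact ⟨hxd, hx, fun h => hxI (hI _ h x (tsub_le_self : x - _ ≤ x))⟩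
      · refine ⟨hxd, hx, fun h => ?_⟩
        have := congrFun (hgen.2 _ h (tsub_le_self : x - _ ≤ x)) (Fin.last n)
        rw [Pi.sub_apply, Pi.single_eq_same] at this
        omega
  have hdisj : Disjoint {m | mdeg m = d + 1 ∧ m ∉ I}
      {M | MinGen I M ∧ maxVar M = n + 1 ∧ mdeg M = d + 1} :=
    Set.disjoint_left.2 fun _ hx hgen => hx.2 hgen.1.1
  rw [hilb, hilb, ← Set.ncard_image_of_injective _ (add_left_injective (Pi.single (Fin.last n) 1)),
    image_add_single_setOf, hsplit,
    Set.ncard_union_eq hdisj ((finite_setOf_mdeg_eq _).subset fun _ h => h.1)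
      ((finite_setOf_mdeg_eq _).subset fun _ h => h.2.2)]

end LastVariable

/-- For an ARL ideal with `max M_ω = n` and `d ≥ f = min{t : x_{n-1}^t ∈ I}`,
`H(R/I,d-1) - H(R/I,d)` equals the number of minimal generators of degree `d`
with `max = n`; in particular `H(R/I,d) ≤ H(R/I,d-1)`. -/
theorem arl_hilbert_difference {n : ℕ} (I : Set (Fin (n + 2) → ℕ))
    (hI : MonIdeal I) (hARL : ARL I)
    (W : Fin (n + 2) → ℕ) (hW : IsLastGen I W) (hWn : maxVar W = n + 2)
    (d : ℕ) (hd : sInf {t | Pi.single (⟨n, by omega⟩ : Fin (n + 2)) t ∈ I} ≤ d) :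
    hilb I d ≤ hilb I (d - 1) ∧
      hilb I (d - 1) - hilb I d =
        Set.ncard {M : Fin (n + 2) → ℕ |
          MinGen I M ∧ maxVar M = n + 2 ∧ mdeg M = d} := by
  set j : Fin (n + 2) := ⟨n, by omega⟩
  have hWlast : 0 < W (Fin.last (n + 1)) := (maxVar_eq_iff W).1 hWn
  have hgen := minGen_single_sInf <|
    hARL.single_mdeg_mem hW.1 hWlast (j := j) (by simp [j, Fin.ext_iff])
  have hzero : (0 : Fin (n + 2) → ℕ) ∉ I := fun h0 => by
    rw [← hW.1.2 0 h0 fun _ => Nat.zero_le _] at hWlast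
    exact lt_irrefl 0 hWlast
  obtain ⟨e, rfl⟩ : ∃ e, d = e + 1 := Nat.exists_eq_add_of_le' <| Nat.pos_of_ne_zero <| by
    rintro rfl
    have h0 := hgen.1
    rw [Nat.le_zero.1 hd, Pi.single_zero] at h0
    exact hzero h0
  have hlow : ∀ m, mdeg m = e + 1 → m (Fin.last (n + 1)) = 0 → m ∈ I := fun m hm hlast =>
    hARL.mem_of_le_mdeg hI hgen (hm ▸ hd) fun k hjk => by
      have hk : k = Fin.last (n + 1) := Fin.ext <| by
        simp only [j, Fin.lt_def] at hjk
        simp only [Fin.val_last]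
        omega
      rwa [hk]
  have hcount : hilb I e = hilb I (e + 1) +
      {M : Fin (n + 2) → ℕ | MinGen I M ∧ maxVar M = n + 2 ∧ mdeg M = e + 1}.ncard :=
    hilb_eq_hilb_succ_add hI hARL hlow
  simp only [add_tsub_cancel_right]
  omega
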